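/- arXiv:1407.2464 — 8 statements merged into one kernel-verified Lean document; each statement's English description precedes it below -/
import Mathlib

section
/- Let G be a finite connected simple graph. Then G is chordful (i.e., the vertex set of every cycle of G induces a clique) if and only if the graphical building set 𝓑(G) is closed under intersection, i.e., for all B, B' ∈ 𝓑(G) with B ∩ B' ≠ ∅ one has B ∩ B' ∈ 𝓑(G). -/
/-- The graphical building set of a graph `G`: all nonempty subsets of vertices
inducing a connected subgraph of `G`. -/
def graphBuilding {V : Type*} (G : SimpleGraph V) : Set (Finset V) :=
  {B | B.Nonempty ∧ (G.induce (B : Set V)).Connected}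

/-- A graph is chordful if the vertex set of every cycle induces a clique. -/
def Chordful {V : Type*} (G : SimpleGraph V) : Prop :=
  ∀ (v : V) (c : G.Walk v v), c.IsCycle → G.IsClique {x | x ∈ c.support}

/-!
If `B` and `B'` are connected and `u, w ∈ B ∩ B'`, follow a walk from `u` to `w` inside `B`.
Whenever it leaves `B'`, let `c` be the vertex where it first comes back: the excursion and a
path from `c` back to the current vertex inside `B'` close a cycle, so in a chordful graph the
current vertex is adjacent to `c` and the excursion can be replaced by that edge.
Conversely, two distinct vertices `x, y` of a cycle cut it into two arcs, whose vertex sets are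
connected and meet exactly in `{x, y}`; if this intersection is connected, then `x` and `y` are
adjacent.
-/

namespace SimpleGraph

variable {V : Type*} {G : SimpleGraph V} {u v : V}

lemma Walk.IsPath.start_notMem_support_tail {p : G.Walk u v} (hp : p.IsPath) :
    u ∉ p.support.tail := by
  have hnodup := hp.support_nodup
  rw [← cons_tail_support] at hnodup
  exact (List.nodup_cons.mp hnodup).1

lemma exists_walk_forall_mem_of_induce_preconnected {s : Set V}
    (hs : (G.induce s).Preconnected) (hu : u ∈ s) (hv : v ∈ s) :
    ∃ p : G.Walk u v, ∀ a ∈ p.support, a ∈ s := by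
  obtain ⟨p⟩ := hs ⟨u, hu⟩ ⟨v, hv⟩
  have hp : ∀ a ∈ (p.map (Embedding.induce s).toHom).support, a ∈ s := by
    simp only [Walk.support_map, List.mem_map]
    rintro _ ⟨b, -, rfl⟩
    exact b.2
  exact ⟨_, hp⟩

lemma adj_of_induce_pair_preconnected (huv : u ≠ v) (h : (G.induce {u, v}).Preconnected) :
    G.Adj u v := by
  obtain ⟨p⟩ := h ⟨u, by simp⟩ ⟨v, by simp⟩
  have hadj : G.Adj u p.snd := p.adj_snd (p.not_nil_of_ne (by simpa using huv))
  have hsnd := p.snd.2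
  simp only [Set.mem_insert_iff, Set.mem_singleton_iff] at hsnd
  rcases hsnd with hsnd | hsnd
  · exact absurd hsnd hadj.ne'
  · rwa [hsnd] at hadj

variable [DecidableEq V]

lemma Walk.support_toFinset_mem_graphBuilding (p : G.Walk u v) :
    p.support.toFinset ∈ graphBuilding G :=
  ⟨⟨u, by simp⟩, by rw [List.coe_toFinset]; exact p.connected_induce_support⟩

lemma Walk.toFinset_support_inter_eq_pair_of_isCycle_append {p : G.Walk u v} {q : G.Walk v u}
    (h : (p.append q).IsCycle) : p.support.toFinset ∩ q.support.toFinset = {u, v} := by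
  have hdisj := h.support_nodup
  rw [tail_support_append, List.nodup_append'] at hdisj
  ext a
  simp only [Finset.mem_inter, List.mem_toFinset, Finset.mem_insert, Finset.mem_singleton]
  constructor
  · rintro ⟨hp, hq⟩
    rw [← cons_tail_support, List.mem_cons] at hp hq
    by_contra! hne
    exact hdisj.2.2 (hp.resolve_left hne.1) (hq.resolve_left hne.2)
  · rintro (rfl | rfl)
    · exact ⟨p.start_mem_support, q.end_mem_support⟩
    · exact ⟨p.end_mem_support, q.start_mem_support⟩

end SimpleGraph

open SimpleGraph

section

variable {V : Type*} {G : SimpleGraph V} {u v : V}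

theorem Chordful.adj_of_isPath_of_isPath (hG : Chordful G) {p : G.Walk u v} {q : G.Walk v u}
    (hp : p.IsPath) (hq : q.IsPath) (hpq : p.support.tail.Disjoint q.support.tail)
    (huv : u ≠ v) : G.Adj u v := by
  by_cases hlen : 1 < p.length ∨ 1 < q.length
  · exact hG u _ (hp.isCycle_append hq hpq hlen) (p.append q).start_mem_support
      ((Walk.mem_support_append_iff _ _).2 (Or.inl p.end_mem_support)) huv
  · have : p.length ≠ 0 := fun h => huv (p.eq_of_length_eq_zero h)
    exact p.adj_of_length_eq_one (by omega)

variable [DecidableEq V]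

theorem Chordful.adj_of_walk_meets_only_at_ends (hG : Chordful G) {s : Set V}
    (hs : (G.induce s).Preconnected) (hu : u ∈ s) (hv : v ∈ s) (huv : u ≠ v) (q : G.Walk u v)
    (hq : ∀ a ∈ q.support, a ∈ s → a = u ∨ a = v) : G.Adj u v := by
  obtain ⟨r, hr⟩ := exists_walk_forall_mem_of_induce_preconnected hs hv hu
  refine hG.adj_of_isPath_of_isPath q.bypass_isPath r.bypass_isPath (fun a haq har => ?_) huv
  have has : a ∈ s := hr a (r.support_bypass_subset_support (List.mem_of_mem_tail har))
  rcases hq a (q.support_bypass_subset_support (List.mem_of_mem_tail haq)) has with rfl | rfl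
  · exact q.bypass_isPath.start_notMem_support_tail haq
  · exact r.bypass_isPath.start_notMem_support_tail har

theorem Chordful.exists_walk_forall_mem_inter (hG : Chordful G) {S : Set V} {T : Finset V}
    (hT : (G.induce (T : Set V)).Preconnected) {w : V} (hw : w ∈ T) (p : G.Walk u w)
    (hu : u ∈ T) (hpS : ∀ a ∈ p.support, a ∈ S) :
    ∃ r : G.Walk u w, ∀ a ∈ r.support, a ∈ S ∧ a ∈ T := by
  induction hl : p.length using Nat.strong_induction_on generalizing u with
  | _ n ih =>
  cases p with
  | nil => exact ⟨.nil, by simpa using ⟨hpS _ (by simp), hu⟩⟩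
  | @cons _ a _ hua p =>
    by_cases ha : a ∈ T
    · obtain ⟨r, hr⟩ :=
        ih p.length (by simp [← hl]) p ha (fun b hb => hpS b (by simp [hb])) rfl
      refine ⟨.cons hua r, fun b hb => ?_⟩
      rw [Walk.support_cons, List.mem_cons] at hb
      rcases hb with rfl | hb
      · exact ⟨hpS b (by simp), hu⟩
      · exact hr b hb
    · obtain ⟨c, hcT, hc, hfirst⟩ :=
        p.exists_mem_support_forall_mem_support_imp_eq T ⟨w, by simp [hw]⟩
      have hac : c ≠ a := fun h => ha (h ▸ hcT)
      have hdrop : (p.dropUntil c hc).length < p.length := Walk.length_dropUntil_lt_length hc hac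
      have hdropS : ∀ b ∈ (p.dropUntil c hc).support, b ∈ S := fun b hb =>
        hpS b (by simp [p.support_dropUntil_subset_support hc hb])
      by_cases huc : u = c
      · subst huc
        exact ih _ (by simp [← hl]; omega) _ hcT hdropS rfl
      · have hadj : G.Adj u c := by
          refine hG.adj_of_walk_meets_only_at_ends hT hu hcT huc (.cons hua (p.takeUntil c hc)) ?_
          intro b hb hbT
          rw [Walk.support_cons, List.mem_cons] at hb
          exact hb.imp id (hfirst b hbT)
        exact ih _ (by simp [← hl]; omega) (.cons hadj (p.dropUntil c hc)) hu
          (by simpa [hpS u (by simp)] using hdropS) rfl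

theorem Chordful.inter_mem_graphBuilding (hG : Chordful G) {B B' : Finset V}
    (hB : B ∈ graphBuilding G) (hB' : B' ∈ graphBuilding G) (hne : (B ∩ B').Nonempty) :
    B ∩ B' ∈ graphBuilding G := by
  refine ⟨hne, ?_⟩
  obtain ⟨u, hu⟩ := hne
  rw [Finset.mem_inter] at hu
  refine G.induce_connected_of_patches u (by simpa using hu) fun {v} hv => ?_
  rw [Finset.coe_inter] at hv
  obtain ⟨p, hp⟩ := exists_walk_forall_mem_of_induce_preconnected hB.2.preconnected hu.1 hv.1
  obtain ⟨r, hr⟩ := hG.exists_walk_forall_mem_inter hB'.2.preconnected hv.2 p hu.2 hp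
  exact ⟨_, subset_rfl, by simpa using hu, by simpa using hv,
    (r.induce _ (by simpa using hr)).reachable⟩

theorem chordful_of_inter_mem_graphBuilding
    (h : ∀ B ∈ graphBuilding G, ∀ B' ∈ graphBuilding G, (B ∩ B').Nonempty →
      B ∩ B' ∈ graphBuilding G) : Chordful G := by
  intro v c hc x hx y hy hxy
  set c' := c.rotate x hx
  have hy' : y ∈ c'.support := (c.mem_support_rotate_iff x hx).2 hy
  have hcycle : ((c'.takeUntil y hy').append (c'.dropUntil y hy')).IsCycle := by
    rw [Walk.take_spec]; exact hc.rotate hx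
  have hinter := Walk.toFinset_support_inter_eq_pair_of_isCycle_append hcycle
  have hpair := h _ (Walk.support_toFinset_mem_graphBuilding _) _
    (Walk.support_toFinset_mem_graphBuilding _) (by rw [hinter]; exact ⟨x, by simp⟩)
  rw [hinter] at hpair
  have hconn := hpair.2
  rw [Finset.coe_pair] at hconn
  exact adj_of_induce_pair_preconnected hxy hconn.preconnected

end

theorem chordful_iff_building_closed_under_intersection_general
    {V : Type*} [DecidableEq V] (G : SimpleGraph V) :
    Chordful G ↔
      ∀ B ∈ graphBuilding G, ∀ B' ∈ graphBuilding G,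
        (B ∩ B').Nonempty → B ∩ B' ∈ graphBuilding G :=
  ⟨fun hG _ hB _ hB' hne => hG.inter_mem_graphBuilding hB hB' hne,
    chordful_of_inter_mem_graphBuilding⟩

/-- A finite connected simple graph is chordful if and only if its graphical
building set is closed under (nonempty) intersection. -/
theorem chordful_iff_building_closed_under_intersection
    {V : Type*} [Fintype V] [DecidableEq V] (G : SimpleGraph V)
    (hG : G.Connected) :
    Chordful G ↔
      ∀ B ∈ graphBuilding G, ∀ B' ∈ graphBuilding G,
        (B ∩ B').Nonempty → B ∩ B' ∈ graphBuilding G :=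
  chordful_iff_building_closed_under_intersection_general G
end

section
/- Let G be a finite connected simple graph with vertex set S and let 𝓝 be a subset of 𝓑(G) \ {S}. Then 𝓝 is a 𝓑(G)-nested set if and only if for all N, N' ∈ 𝓝, either N ⊆ N', or N' ⊆ N, or N ∪ N' ∉ 𝓑(G). In particular, the nested complex of a graphical building set is a clique (flag) complex. -/
/-- `𝓝` is a `𝓑`-nested set: a subset of `𝓑 \ {ground set}` such that
(N1) any two elements are nested or disjoint, and (N2) the union of any `k ≥ 2`
pairwise disjoint elements is not in `𝓑`. -/
def IsNested {V : Type*} [Fintype V] [DecidableEq V]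
    (𝓑 𝓝 : Set (Finset V)) : Prop :=
  𝓝 ⊆ 𝓑 \ {Finset.univ} ∧
  (∀ N ∈ 𝓝, ∀ N' ∈ 𝓝, N ⊆ N' ∨ N' ⊆ N ∨ N ∩ N' = ∅) ∧
  (∀ F : Finset (Finset V), ↑F ⊆ 𝓝 → 2 ≤ F.card →
    (∀ N ∈ F, ∀ N' ∈ F, N ≠ N' → N ∩ N' = ∅) → F.biUnion id ∉ 𝓑)

/-!
Condition (N2) for two sets shows that nested sets satisfy the pairwise condition, for any
building set. Conversely, for `𝓑(G)`, two members of `𝓑(G)` that meet have their union in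
`𝓑(G)`, which gives (N1). For (N2), if a union of pairwise disjoint members of `𝓝` induces a
connected subgraph, a walk leaving one of them, `N`, crosses an edge into another one, `N'`;
then `N ∪ N' ∈ 𝓑(G)` although `N` and `N'` are disjoint and distinct, violating the pairwise condition.
-/

namespace SimpleGraph

variable {V : Type*} {G : SimpleGraph V}

theorem exists_adj_of_induce_preconnected {s t : Set V} (hs : (G.induce s).Preconnected)
    {x y : V} (hxs : x ∈ s) (hxt : x ∈ t) (hys : y ∈ s) (hyt : y ∉ t) :
    ∃ u ∈ s, u ∈ t ∧ ∃ v ∈ s, v ∉ t ∧ G.Adj u v := by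
  obtain ⟨w⟩ := hs ⟨x, hxs⟩ ⟨y, hys⟩
  obtain ⟨d, -, hd₁, hd₂⟩ := w.exists_boundary_dart {z | (z : V) ∈ t} hxt hyt
  exact ⟨d.fst, d.fst.2, hd₁, d.snd, d.snd.2, hd₂, d.adj⟩

end SimpleGraph

section GraphBuilding

variable {V : Type*} [DecidableEq V] {G : SimpleGraph V}

theorem union_mem_graphBuilding_of_inter_nonempty {N N' : Finset V}
    (hN : N ∈ graphBuilding G) (hN' : N' ∈ graphBuilding G) (hNN' : (N ∩ N').Nonempty) :
    N ∪ N' ∈ graphBuilding G := by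
  refine ⟨hN.1.mono Finset.subset_union_left, ?_⟩
  rw [Finset.coe_union]
  exact SimpleGraph.induce_union_connected hN.2.preconnected hN'.2.preconnected
    (by exact_mod_cast hNN')

theorem union_mem_graphBuilding_of_adj {N N' : Finset V}
    (hN : N ∈ graphBuilding G) (hN' : N' ∈ graphBuilding G)
    {u v : V} (hu : u ∈ N) (hv : v ∈ N') (huv : G.Adj u v) :
    N ∪ N' ∈ graphBuilding G := by
  refine ⟨hN.1.mono Finset.subset_union_left, ?_⟩
  rw [Finset.coe_union]
  exact SimpleGraph.connected_induce_union hN.2.preconnected hN'.2.preconnected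
    (by exact_mod_cast hu) (by exact_mod_cast hv) huv

theorem exists_adj_of_biUnion_mem_graphBuilding {F : Finset (Finset V)}
    (hF : F.biUnion id ∈ graphBuilding G) {N : Finset V} (hN : N ∈ F) (hNne : N.Nonempty)
    {y : V} (hy : y ∈ F.biUnion id) (hyN : y ∉ N) :
    ∃ N' ∈ F, ∃ u ∈ N, ∃ v ∈ N', v ∉ N ∧ G.Adj u v := by
  obtain ⟨x, hx⟩ := hNne
  have hxF : x ∈ F.biUnion id := Finset.mem_biUnion.mpr ⟨N, hN, hx⟩
  obtain ⟨u, -, hu, v, hvF, hvN, huv⟩ :=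
    SimpleGraph.exists_adj_of_induce_preconnected (t := (N : Set V)) hF.2.preconnected
      (Finset.mem_coe.mpr hxF) hx (Finset.mem_coe.mpr hy) hyN
  obtain ⟨N', hN', hv⟩ := Finset.mem_biUnion.mp hvF
  exact ⟨N', hN', u, hu, v, hv, hvN, huv⟩

end GraphBuilding

theorem IsNested.subset_or_subset_or_union_notMem {V : Type*} [Fintype V] [DecidableEq V]
    {𝓑 𝓝 : Set (Finset V)} (h : IsNested 𝓑 𝓝) {N N' : Finset V} (hN : N ∈ 𝓝)
    (hN' : N' ∈ 𝓝) : N ⊆ N' ∨ N' ⊆ N ∨ N ∪ N' ∉ 𝓑 := by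
  obtain ⟨-, hpair, hunion⟩ := h
  rcases hpair N hN N' hN' with hsub | hsub | hdisj
  · exact Or.inl hsub
  · exact Or.inr (Or.inl hsub)
  by_cases hne : N = N'
  · exact Or.inl hne.subset
  refine Or.inr (Or.inr ?_)
  have hdisj' : N' ∩ N = ∅ := by rwa [Finset.inter_comm]
  simpa using hunion {N, N'} (by simp [Set.insert_subset_iff, hN, hN'])
    (Finset.card_pair hne).ge (by aesop)

theorem isNested_graphBuilding_iff_general
    {V : Type*} [Fintype V] [DecidableEq V] (G : SimpleGraph V)
    (𝓝 : Set (Finset V))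
    (h𝓝 : 𝓝 ⊆ graphBuilding G \ {Finset.univ}) :
    IsNested (graphBuilding G) 𝓝 ↔
      ∀ N ∈ 𝓝, ∀ N' ∈ 𝓝, N ⊆ N' ∨ N' ⊆ N ∨ N ∪ N' ∉ graphBuilding G := by
  refine ⟨fun h N hN N' hN' => h.subset_or_subset_or_union_notMem hN hN', fun h => ?_⟩
  have mem {N} (hN : N ∈ 𝓝) : N ∈ graphBuilding G := (h𝓝 hN).1
  refine ⟨h𝓝, fun N hN N' hN' => ?_, fun F hF hcard hdisj hU => ?_⟩
  · refine (h N hN N' hN').imp_right (Or.imp_right fun hU => ?_)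
    by_contra hne
    exact hU (union_mem_graphBuilding_of_inter_nonempty (mem hN) (mem hN')
      (Finset.nonempty_iff_ne_empty.mpr hne))
  · obtain ⟨N, hN, N₂, hN₂, hNN₂⟩ := Finset.one_lt_card.mp hcard
    obtain ⟨y, hy⟩ := (mem (hF hN₂)).1
    have hyN : y ∉ N := fun hyN => by
      simpa [hdisj N hN N₂ hN₂ hNN₂] using Finset.mem_inter.mpr ⟨hyN, hy⟩
    obtain ⟨N', hN', u, hu, v, hv, hvN, huv⟩ := exists_adj_of_biUnion_mem_graphBuilding hU hN
      (mem (hF hN)).1 (Finset.mem_biUnion.mpr ⟨N₂, hN₂, hy⟩) hyN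
    have hNN' : N ≠ N' := by rintro rfl; exact hvN hv
    rcases h N (hF hN) N' (hF hN') with hsub | hsub | hnot
    · simpa [hdisj N hN N' hN' hNN'] using Finset.mem_inter.mpr ⟨hu, hsub hu⟩
    · exact hvN (hsub hv)
    · exact hnot (union_mem_graphBuilding_of_adj (mem (hF hN)) (mem (hF hN')) hu hv huv)

/-- For a graphical building set, a subset `𝓝 ⊆ 𝓑(G) \ {S}` is nested if and
only if any two of its elements `N, N'` satisfy `N ⊆ N'`, `N' ⊆ N`, or
`N ∪ N' ∉ 𝓑(G)`; in particular the nested complex of a graphical building set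
is a clique (flag) complex. -/
theorem isNested_graphBuilding_iff
    {V : Type*} [Fintype V] [DecidableEq V] (G : SimpleGraph V)
    (hG : G.Connected) (𝓝 : Set (Finset V))
    (h𝓝 : 𝓝 ⊆ graphBuilding G \ {Finset.univ}) :
    IsNested (graphBuilding G) 𝓝 ↔
      ∀ N ∈ 𝓝, ∀ N' ∈ 𝓝, N ⊆ N' ∨ N' ⊆ N ∨ N ∪ N' ∉ graphBuilding G :=
  isNested_graphBuilding_iff_general G 𝓝 h𝓝
end

section
/- Let S be a finite set and let 𝓘 be a nonempty finite family of nonempty subsets of S such that ⋂_{I ∈ 𝓘} I ≠ ∅. In ℝ^S with canonical basis (e_s)_{s ∈ S}, let Δ_I = conv{e_i : i ∈ I} denote the face of the standard simplex corresponding to I. Then the dimension of the Minkowski sum Σ_{I ∈ 𝓘} Δ_I equals |⋃_{I ∈ 𝓘} I| − 1, where dimension means the rank (finrank) of the vector span of all differences of points of the set. -/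
/-!
The vector span of a Minkowski sum of nonempty sets is the join of their vector spans, and the
vector span of the face `Δ_I` is that of its vertices `e_i`, `i ∈ I`. All these vertex sets contain
the common vertex `e_a`, so the join of their vector spans is the vector span of their union, the
vertices `e_i` with `i ∈ ⋃ 𝓘`. These are affinely independent, hence span an affine subspace of
dimension `|⋃ 𝓘| - 1`.
-/

open Pointwise

/-- The face `Δ_T = conv{e_t : t ∈ T}` of the standard simplex in `ℝ^α`
corresponding to a subset `T`. -/
noncomputable def simplexFace (α : Type*) [DecidableEq α] (T : Finset α) :
    Set (α → ℝ) :=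
  convexHull ℝ {x : α → ℝ | ∃ t ∈ T, x = Pi.single t 1}

section

variable {k V P : Type*} [Ring k] [AddCommGroup V] [Module k V] [AddTorsor V P]

theorem vectorSpan_add {A B : Set V} (hA : A.Nonempty) (hB : B.Nonempty) :
    vectorSpan k (A + B) = vectorSpan k A ⊔ vectorSpan k B := by
  obtain ⟨a₀, ha₀⟩ := hA
  obtain ⟨b₀, hb₀⟩ := hB
  refine le_antisymm ?_ (sup_le ?_ ?_)
  · rw [vectorSpan_def, Submodule.span_le]
    rintro _ ⟨_, ⟨a, ha, b, hb, rfl⟩, _, ⟨a', ha', b', hb', rfl⟩, rfl⟩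
    change a + b - (a' + b') ∈ _
    rw [add_sub_add_comm]
    exact Submodule.add_mem _ (Submodule.mem_sup_left (vsub_mem_vectorSpan k ha ha'))
      (Submodule.mem_sup_right (vsub_mem_vectorSpan k hb hb'))
  · calc vectorSpan k A = vectorSpan k (A + {b₀}) := by
          rw [add_comm, Set.singleton_add, ← vectorSpan_vadd k A b₀]; rfl
      _ ≤ vectorSpan k (A + B) :=
          vectorSpan_mono k (Set.add_subset_add_left (Set.singleton_subset_iff.2 hb₀))
  · calc vectorSpan k B = vectorSpan k ({a₀} + B) := by
          rw [Set.singleton_add, ← vectorSpan_vadd k B a₀]; rfl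
      _ ≤ vectorSpan k (A + B) :=
          vectorSpan_mono k (Set.add_subset_add_right (Set.singleton_subset_iff.2 ha₀))

theorem vectorSpan_finsetSum {ι : Type*} {s : Finset ι} {A : ι → Set V}
    (hA : ∀ i ∈ s, (A i).Nonempty) :
    vectorSpan k (∑ i ∈ s, A i) = ⨆ i ∈ s, vectorSpan k (A i) := by
  classical
  induction s using Finset.induction_on with
  | empty => simp [← Set.singleton_zero]
  | insert i s hi ih =>
    have hA' : ∀ j ∈ s, (A j).Nonempty := fun j hj => hA j (Finset.mem_insert_of_mem hj)
    have hsum : (∑ j ∈ s, A j).Nonempty := by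
      choose! g hg using hA'
      exact ⟨_, Set.finsetSum_mem_finsetSum s A g hg⟩
    rw [Finset.sum_insert hi, vectorSpan_add (hA i (Finset.mem_insert_self i s)) hsum, ih hA',
      Finset.iSup_insert]

theorem vectorSpan_biUnion_of_mem {ι : Type*} {t : Finset ι} {s : ι → Set P} {p : P}
    (hp : ∀ i ∈ t, p ∈ s i) :
    vectorSpan k (⋃ i ∈ t, s i) = ⨆ i ∈ t, vectorSpan k (s i) := by
  rcases t.eq_empty_or_nonempty with rfl | ⟨i, hi⟩
  · simp
  rw [vectorSpan_eq_span_vsub_set_right k (Set.mem_iUnion₂.2 ⟨i, hi, hp i hi⟩),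
    Set.image_iUnion₂, Submodule.span_iUnion₂]
  exact biSup_congr fun j hj => (vectorSpan_eq_span_vsub_set_right k (hp j hj)).symm

end

theorem finrank_vectorSpan_image_single_one (k : Type*) {α : Type*} [DivisionRing k] [DecidableEq α]
    (U : Finset α) :
    Module.finrank k (vectorSpan k ((Pi.single · (1 : k)) '' (U : Set α))) = U.card - 1 := by
  rcases U.eq_empty_or_nonempty with rfl | hU
  · rw [Finset.coe_empty, Set.image_empty, vectorSpan_empty, finrank_bot, Finset.card_empty]
  classical
  rw [← Finset.coe_image]
  exact (Pi.linearIndependent_single_one α k).affineIndependent.finrank_vectorSpan_image_finset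
    (Nat.succ_pred_eq_of_pos hU.card_pos).symm

theorem simplexFace_eq_convexHull_image (α : Type*) [DecidableEq α] (T : Finset α) :
    simplexFace α T = convexHull ℝ ((Pi.single · (1 : ℝ)) '' (T : Set α)) := by
  rw [simplexFace]
  congr 1
  ext x
  simp [eq_comm]

theorem vectorSpan_simplexFace (α : Type*) [DecidableEq α] (T : Finset α) :
    vectorSpan ℝ (simplexFace α T) = vectorSpan ℝ ((Pi.single · (1 : ℝ)) '' (T : Set α)) := by
  rw [simplexFace_eq_convexHull_image, ← direction_affineSpan, affineSpan_convexHull,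
    direction_affineSpan]

theorem finrank_minkowski_sum_simplexFaces_general (α : Type*) [DecidableEq α]
    (𝓘 : Finset (Finset α))
    (hint : ∃ a : α, ∀ I ∈ 𝓘, a ∈ I) :
    Module.finrank ℝ (vectorSpan ℝ (∑ I ∈ 𝓘, simplexFace α I)) =
      (𝓘.biUnion id).card - 1 := by
  obtain ⟨a, ha⟩ := hint
  have hvertex : ∀ I ∈ 𝓘, Pi.single a (1 : ℝ) ∈ (Pi.single · (1 : ℝ)) '' (I : Set α) :=
    fun I hI => Set.mem_image_of_mem _ (ha I hI)
  have hface : ∀ I ∈ 𝓘, (simplexFace α I).Nonempty := fun I hI =>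
    ⟨_, simplexFace_eq_convexHull_image α I ▸ subset_convexHull ℝ _ (hvertex I hI)⟩
  rw [vectorSpan_finsetSum hface, biSup_congr fun I _ => vectorSpan_simplexFace α I,
    ← vectorSpan_biUnion_of_mem hvertex, ← Set.image_iUnion₂,
    ← finrank_vectorSpan_image_single_one ℝ (𝓘.biUnion id), Finset.coe_biUnion]
  rfl

/-- If `𝓘` is a nonempty finite family of nonempty subsets of a finite set `α`
with nonempty intersection, then the dimension of the Minkowski sum
`Σ_{I ∈ 𝓘} Δ_I` of the corresponding faces of the standard simplex equals
`|⋃ 𝓘| - 1`, where dimension means the rank of the vector span of all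
differences of points. -/
theorem finrank_minkowski_sum_simplexFaces (α : Type*) [Fintype α] [DecidableEq α]
    (𝓘 : Finset (Finset α)) (h𝓘 : 𝓘.Nonempty) (hne : ∀ I ∈ 𝓘, I.Nonempty)
    (hint : ∃ a : α, ∀ I ∈ 𝓘, a ∈ I) :
    Module.finrank ℝ (vectorSpan ℝ (∑ I ∈ 𝓘, simplexFace α I)) =
      (𝓘.biUnion id).card - 1 :=
  finrank_minkowski_sum_simplexFaces_general α 𝓘 hint
end

section
/- Let 𝓑 be a connected building set on a finite ground set S that is closed under intersection. Then the set Π(𝓑) of all 𝓑-paths is a generating subset of 𝓑: for every B ∈ 𝓑 and every b ∈ B, B is the union of the 𝓑-paths P ∈ Π(𝓑) with b ∈ P ⊆ B. -/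
/-- `𝓑` is a building set on the finite ground set `V`: a collection of
nonempty subsets of `V` such that (B1) the union of two intersecting elements
is again an element, and (B2) all singletons are elements. -/
def IsBuilding {V : Type*} [DecidableEq V] (𝓑 : Set (Finset V)) : Prop :=
  (∀ B ∈ 𝓑, B.Nonempty) ∧
  (∀ B ∈ 𝓑, ∀ B' ∈ 𝓑, (B ∩ B').Nonempty → B ∪ B' ∈ 𝓑) ∧
  (∀ s : V, ({s} : Finset V) ∈ 𝓑)

/-- `P` is the `𝓑`-path `π(s,t)`: the inclusion-smallest element of `𝓑`
containing both `s` and `t`. -/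
def IsMinPath {V : Type*} (𝓑 : Set (Finset V)) (s t : V) (P : Finset V) : Prop :=
  P ∈ 𝓑 ∧ s ∈ P ∧ t ∈ P ∧ ∀ B ∈ 𝓑, s ∈ B → t ∈ B → P ⊆ B

/-- `P` is a `𝓑`-path, i.e. an element of `Π(𝓑)`. -/
def IsBPath {V : Type*} (𝓑 : Set (Finset V)) (P : Finset V) : Prop :=
  ∃ s t : V, IsMinPath 𝓑 s t P

/-- `𝓒` is a generating subset of `𝓑`: for every `B ∈ 𝓑` and `b ∈ B`, the set
`B` is the union of the elements `C ∈ 𝓒` with `b ∈ C ⊆ B`. -/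
def IsGenerating {V : Type*} (𝓑 𝓒 : Set (Finset V)) : Prop :=
  𝓒 ⊆ 𝓑 ∧ ∀ B ∈ 𝓑, ∀ b ∈ B,
    (B : Set V) = ⋃ C ∈ {C : Finset V | C ∈ 𝓒 ∧ b ∈ C ∧ C ⊆ B}, (C : Set V)

/-! A `⊆`-minimal element of `𝓑` containing `s` and `t` is already the smallest one, since
intersecting it with any other such element stays in `𝓑`. -/

theorem exists_isMinPath {V : Type*} [DecidableEq V] {𝓑 : Set (Finset V)}
    (hclosed : ∀ B ∈ 𝓑, ∀ B' ∈ 𝓑, (B ∩ B').Nonempty → B ∩ B' ∈ 𝓑) {s t : V}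
    (h : ∃ B ∈ 𝓑, s ∈ B ∧ t ∈ B) : ∃ P, IsMinPath 𝓑 s t P := by
  obtain ⟨P, ⟨hP, hsP, htP⟩, hmin⟩ :=
    exists_minimal_of_wellFoundedLT (fun B : Finset V ↦ B ∈ 𝓑 ∧ s ∈ B ∧ t ∈ B) h
  refine ⟨P, hP, hsP, htP, fun B hB hsB htB ↦ ?_⟩
  have hPB : P ∩ B ∈ 𝓑 := hclosed P hP B hB ⟨s, Finset.mem_inter.2 ⟨hsP, hsB⟩⟩
  have hle : P ⊆ P ∩ B :=
    hmin ⟨hPB, Finset.mem_inter.2 ⟨hsP, hsB⟩, Finset.mem_inter.2 ⟨htP, htB⟩⟩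
      Finset.inter_subset_left
  exact hle.trans Finset.inter_subset_right

theorem IsBPath.mem {V : Type*} {𝓑 : Set (Finset V)} {P : Finset V} (hP : IsBPath 𝓑 P) :
    P ∈ 𝓑 := by
  obtain ⟨_, _, hmin⟩ := hP
  exact hmin.1

theorem isGenerating_of_forall_pair {V : Type*} {𝓑 𝓒 : Set (Finset V)} (h𝓒 : 𝓒 ⊆ 𝓑)
    (hpair : ∀ B ∈ 𝓑, ∀ b ∈ B, ∀ x ∈ B, ∃ C ∈ 𝓒, b ∈ C ∧ x ∈ C ∧ C ⊆ B) :
    IsGenerating 𝓑 𝓒 := by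
  refine ⟨h𝓒, fun B hB b hb ↦ Set.Subset.antisymm (fun x hx ↦ ?_) ?_⟩
  · obtain ⟨C, hC, hbC, hxC, hCB⟩ := hpair B hB b hb x hx
    exact Set.mem_biUnion (x := C) ⟨hC, hbC, hCB⟩ hxC
  · exact Set.iUnion₂_subset fun C ⟨_, _, hCB⟩ ↦ Finset.coe_subset.2 hCB

theorem bPaths_isGenerating_general {V : Type*} [Fintype V] [DecidableEq V]
    (𝓑 : Set (Finset V))
    (hconn : (Finset.univ : Finset V) ∈ 𝓑)
    (hclosed : ∀ B ∈ 𝓑, ∀ B' ∈ 𝓑, (B ∩ B').Nonempty → B ∩ B' ∈ 𝓑) :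
    IsGenerating 𝓑 {P : Finset V | IsBPath 𝓑 P} := by
  refine isGenerating_of_forall_pair (fun P hP ↦ IsBPath.mem hP) fun B hB b hb x hx ↦ ?_
  obtain ⟨P, hP⟩ := exists_isMinPath hclosed ⟨Finset.univ, hconn, Finset.mem_univ b,
    Finset.mem_univ x⟩
  exact ⟨P, ⟨b, x, hP⟩, hP.2.1, hP.2.2.1, hP.2.2.2 B hB hb hx⟩

/-- For a connected building set `𝓑` closed under intersection, the set
`Π(𝓑)` of all `𝓑`-paths is a generating subset of `𝓑`. -/
theorem bPaths_isGenerating {V : Type*} [Fintype V] [DecidableEq V]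
    (𝓑 : Set (Finset V)) (hbuild : IsBuilding 𝓑)
    (hconn : (Finset.univ : Finset V) ∈ 𝓑)
    (hclosed : ∀ B ∈ 𝓑, ∀ B' ∈ 𝓑, (B ∩ B').Nonempty → B ∩ B' ∈ 𝓑) :
    IsGenerating 𝓑 {P : Finset V | IsBPath 𝓑 P} :=
  bPaths_isGenerating_general 𝓑 hconn hclosed
end

section
/- Let 𝓑 be a connected building set on a finite ground set S that is closed under intersection, and for S' ⊆ S let ȳ_{S'} be the number of unordered pairs {s, t} of elements of S (allowing s = t) such that π(s,t) = S'. Then: (i) ȳ_{S'} > 0 if S' ∈ Π(𝓑) and ȳ_{S'} = 0 otherwise; (ii) for every B ∈ 𝓑, Σ_{S' ⊆ B} ȳ_{S'} = C(|B| + 1, 2), where C(n, 2) denotes the binomial coefficient n choose 2. -/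
/-- The dilation coefficient `ȳ_{S'}`: the number of unordered pairs `{s, t}`
of elements of the ground set (allowing `s = t`) whose `𝓑`-path `π(s,t)`
equals `S'`. -/
noncomputable def ybar {V : Type*} (𝓑 : Set (Finset V)) (S' : Finset V) : ℕ :=
  Set.ncard {z : Sym2 V | ∃ s t : V, z = Sym2.mk s t ∧ IsMinPath 𝓑 s t S'}

section
variable {V : Type*} {𝓑 : Set (Finset V)} {s t : V} {P Q : Finset V}

theorem IsMinPath.symm (h : IsMinPath 𝓑 s t P) : IsMinPath 𝓑 t s P :=
  ⟨h.1, h.2.2.1, h.2.1, fun B hB ht hs => h.2.2.2 B hB hs ht⟩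

theorem IsMinPath.unique (h : IsMinPath 𝓑 s t P) (h' : IsMinPath 𝓑 s t Q) : P = Q :=
  (h.2.2.2 Q h'.1 h'.2.1 h'.2.2.1).antisymm (h'.2.2.2 P h.1 h.2.1 h.2.2.1)

variable (𝓑) in
def pathPairs (P : Finset V) : Set (Sym2 V) :=
  {z | ∃ s t : V, z = s(s, t) ∧ IsMinPath 𝓑 s t P}

theorem ybar_eq_ncard_pathPairs : ybar 𝓑 P = (pathPairs 𝓑 P).ncard := rfl

theorem mk_mem_pathPairs : s(s, t) ∈ pathPairs 𝓑 P ↔ IsMinPath 𝓑 s t P := by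
  refine ⟨?_, fun h => ⟨s, t, rfl, h⟩⟩
  rintro ⟨s', t', heq, h⟩
  rcases Sym2.eq_iff.1 heq with ⟨rfl, rfl⟩ | ⟨rfl, rfl⟩
  exacts [h, h.symm]

theorem pathPairs_subset_sym2 : pathPairs 𝓑 P ⊆ P.sym2 := by
  rintro _ ⟨s, t, rfl, h⟩
  exact Finset.mk_mem_sym2_iff.2 ⟨h.2.1, h.2.2.1⟩

theorem ybar_pos_iff : 0 < ybar 𝓑 P ↔ IsBPath 𝓑 P := by
  rw [ybar_eq_ncard_pathPairs, Set.ncard_pos ((P.sym2.finite_toSet).subset pathPairs_subset_sym2)]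
  exact ⟨fun ⟨_, s, t, _, h⟩ => ⟨s, t, h⟩, fun ⟨s, t, h⟩ => ⟨_, s, t, rfl, h⟩⟩

open scoped Function in
theorem pairwise_disjoint_pathPairs : Pairwise (Disjoint on pathPairs 𝓑) := by
  intro P Q hPQ
  refine Set.disjoint_left.2 ?_
  rintro _ ⟨s, t, rfl, hP⟩ hQ
  exact hPQ (hP.unique (mk_mem_pathPairs.1 hQ))

end

section
variable {V : Type*} [DecidableEq V] {𝓑 : Set (Finset V)} {s t : V} {B : Finset V}

theorem exists_isMinPath_of_mem
    (hclosed : ∀ B ∈ 𝓑, ∀ B' ∈ 𝓑, (B ∩ B').Nonempty → B ∩ B' ∈ 𝓑)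
    (hB : B ∈ 𝓑) (hs : s ∈ B) (ht : t ∈ B) : ∃ P, IsMinPath 𝓑 s t P := by
  obtain ⟨P, ⟨hP, hsP, htP⟩, hmin⟩ :=
    wellFounded_lt.has_min {C | C ∈ 𝓑 ∧ s ∈ C ∧ t ∈ C} ⟨B, hB, hs, ht⟩
  refine ⟨P, hP, hsP, htP, fun B' hB' hsB' htB' => ?_⟩
  have hs' : s ∈ P ∩ B' := Finset.mem_inter.2 ⟨hsP, hsB'⟩
  have ht' : t ∈ P ∩ B' := Finset.mem_inter.2 ⟨htP, htB'⟩
  have hnlt : ¬ P ∩ B' < P := hmin _ ⟨hclosed P hP B' hB' ⟨s, hs'⟩, hs', ht'⟩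
  have heq : P ∩ B' = P := (Finset.inter_subset_left.lt_or_eq).resolve_left hnlt
  exact heq ▸ Finset.inter_subset_right

theorem biUnion_powerset_pathPairs
    (hclosed : ∀ B ∈ 𝓑, ∀ B' ∈ 𝓑, (B ∩ B').Nonempty → B ∩ B' ∈ 𝓑) (hB : B ∈ 𝓑) :
    ⋃ P ∈ B.powerset, pathPairs 𝓑 P = B.sym2 := by
  ext z
  induction z with
  | _ s t =>
    simp only [Set.mem_iUnion, Finset.mem_coe, Finset.mem_powerset, mk_mem_pathPairs,
      Finset.mk_mem_sym2_iff, exists_prop]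
    constructor
    · rintro ⟨P, hPB, h⟩
      exact ⟨hPB h.2.1, hPB h.2.2.1⟩
    · rintro ⟨hs, ht⟩
      obtain ⟨P, h⟩ := exists_isMinPath_of_mem hclosed hB hs ht
      exact ⟨P, h.2.2.2 B hB hs ht, h⟩

theorem sum_powerset_ybar
    (hclosed : ∀ B ∈ 𝓑, ∀ B' ∈ 𝓑, (B ∩ B').Nonempty → B ∩ B' ∈ 𝓑) (hB : B ∈ 𝓑) :
    ∑ P ∈ B.powerset, ybar 𝓑 P = (B.card + 1).choose 2 := by
  rw [← Finset.card_sym2, ← Set.ncard_coe_finset, ← biUnion_powerset_pathPairs hclosed hB,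
    ← Finset.set_biUnion_coe,
    B.powerset.finite_toSet.ncard_biUnion
      (s := pathPairs 𝓑) (fun P _ => (P.sym2.finite_toSet).subset pathPairs_subset_sym2)
      (pairwise_disjoint_pathPairs.set_pairwise _), finsum_mem_coe_finset]
  simp only [ybar_eq_ncard_pathPairs]

end

theorem ybar_pos_iff_and_sum_general {V : Type*} [DecidableEq V]
    (𝓑 : Set (Finset V))
    (hclosed : ∀ B ∈ 𝓑, ∀ B' ∈ 𝓑, (B ∩ B').Nonempty → B ∩ B' ∈ 𝓑) :
    (∀ S' : Finset V,
      (IsBPath 𝓑 S' → 0 < ybar 𝓑 S') ∧ (¬ IsBPath 𝓑 S' → ybar 𝓑 S' = 0)) ∧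
    (∀ B ∈ 𝓑, ∑ S' ∈ B.powerset, ybar 𝓑 S' = (B.card + 1).choose 2) :=
  ⟨fun _ => ⟨ybar_pos_iff.2, fun h => Nat.eq_zero_of_not_pos (mt ybar_pos_iff.1 h)⟩,
    fun _ hB => sum_powerset_ybar hclosed hB⟩

/-- For a connected building set `𝓑` closed under intersection:
(i) `ȳ_{S'} > 0` if `S'` is a `𝓑`-path and `ȳ_{S'} = 0` otherwise;
(ii) for every `B ∈ 𝓑`, the sum of `ȳ_{S'}` over all `S' ⊆ B` equals the
binomial coefficient `C(|B| + 1, 2)`. -/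
theorem ybar_pos_iff_and_sum {V : Type*} [Fintype V] [DecidableEq V]
    (𝓑 : Set (Finset V)) (hbuild : IsBuilding 𝓑)
    (hconn : (Finset.univ : Finset V) ∈ 𝓑)
    (hclosed : ∀ B ∈ 𝓑, ∀ B' ∈ 𝓑, (B ∩ B').Nonempty → B ∩ B' ∈ 𝓑) :
    (∀ S' : Finset V,
      (IsBPath 𝓑 S' → 0 < ybar 𝓑 S') ∧ (¬ IsBPath 𝓑 S' → ybar 𝓑 S' = 0)) ∧
    (∀ B ∈ 𝓑, ∑ S' ∈ B.powerset, ybar 𝓑 S' = (B.card + 1).choose 2) :=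
  ybar_pos_iff_and_sum_general 𝓑 hclosed
end

section
/- Let γ be a real number with γ > 2, let a, b, c be nonnegative integers, let k ≥ 0, and let d_1, …, d_k be positive integers. Then γ^{2 + a + b + c + d_1 + ⋯ + d_k} > γ^{1 + b + c} + γ^{1 + a + c} + Σ_{i=1}^k γ^{d_i}. -/
/-! Every power of `γ ≥ 2` with positive exponent is at least `2`, and `x + y ≤ x * y` for
`x, y ≥ 2`; so adding `γ ^ d` to a quantity below `γ ^ M` keeps it below `γ ^ (M + d)`.
Starting from `γ ^ (1 + b + c) + γ ^ (1 + a + c) ≤ 2 γ ^ (1 + a + b + c) < γ ^ (2 + a + b + c)`,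
the terms `γ ^ d i` are absorbed one at a time. -/

section

variable {R : Type*} [Semiring R] [LinearOrder R] [IsStrictOrderedRing R] {γ : R}

theorem pow_add_pow_lt_pow_succ (hγ : 2 < γ) {m₁ m₂ n : ℕ} (h₁ : m₁ ≤ n) (h₂ : m₂ ≤ n) :
    γ ^ m₁ + γ ^ m₂ < γ ^ (n + 1) := by
  have hpos : 0 < γ ^ n := pow_pos (zero_lt_two.trans hγ) n
  have hγ₁ : 1 ≤ γ := one_le_two.trans hγ.le
  calc γ ^ m₁ + γ ^ m₂ ≤ γ ^ n + γ ^ n := by gcongr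
    _ = 2 * γ ^ n := (two_mul _).symm
    _ < γ * γ ^ n := by gcongr
    _ = γ ^ (n + 1) := (pow_succ' γ n).symm

theorem two_le_pow (hγ : 2 ≤ γ) {n : ℕ} (hn : n ≠ 0) : 2 ≤ γ ^ n :=
  hγ.trans (le_self_pow₀ (one_le_two.trans hγ) hn)

theorem add_pow_lt_pow_add {S : R} {M d : ℕ} (hγ : 2 ≤ γ) (hM : M ≠ 0) (hd : d ≠ 0)
    (hS : S < γ ^ M) : S + γ ^ d < γ ^ (M + d) :=
  calc S + γ ^ d < γ ^ M + γ ^ d := by gcongr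
    _ ≤ γ ^ M * γ ^ d := add_le_mul (two_le_pow hγ hM) (two_le_pow hγ hd)
    _ = γ ^ (M + d) := (pow_add γ M d).symm

theorem add_sum_pow_lt_pow_add_sum {ι : Type*} (s : Finset ι) {d : ι → ℕ} (hd : ∀ i ∈ s, d i ≠ 0)
    {S : R} {M : ℕ} (hγ : 2 ≤ γ) (hM : M ≠ 0) (hS : S < γ ^ M) :
    S + ∑ i ∈ s, γ ^ d i < γ ^ (M + ∑ i ∈ s, d i) := by
  classical
  induction s using Finset.induction_on with
  | empty => simpa using hS
  | insert j s hj ih =>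
    have hs := ih fun i hi => hd i (Finset.mem_insert_of_mem hi)
    rw [Finset.sum_insert hj, Finset.sum_insert hj]
    convert add_pow_lt_pow_add hγ (by omega) (hd j (Finset.mem_insert_self j s)) hs using 1
      <;> ac_rfl

end

/-- For any real `γ > 2`, nonnegative integers `a, b, c` and positive integers
`d_1, …, d_k`, one has
`γ^{2+a+b+c+d_1+⋯+d_k} > γ^{1+b+c} + γ^{1+a+c} + Σ_i γ^{d_i}`. -/
theorem gamma_pow_inequality (γ : ℝ) (hγ : 2 < γ) (a b c : ℕ) (k : ℕ)
    (d : Fin k → ℕ) (hd : ∀ i, 0 < d i) :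
    γ ^ (1 + b + c) + γ ^ (1 + a + c) + ∑ i, γ ^ (d i)
      < γ ^ (2 + a + b + c + ∑ i, d i) := by
  have hbase : γ ^ (1 + b + c) + γ ^ (1 + a + c) < γ ^ (2 + a + b + c) := by
    rw [show 2 + a + b + c = (1 + a + b + c) + 1 by ring]
    exact pow_add_pow_lt_pow_succ hγ (by omega) (by omega)
  exact add_sum_pow_lt_pow_add_sum Finset.univ (fun i _ => (hd i).ne') hγ.le (by omega) hbase
end

section
/- Let G be a finite connected chordful simple graph with vertex set S, and let s, t ∈ S. Then a subset P ⊆ S is the 𝓑(G)-path π(s,t) (the inclusion-smallest connected subset of G containing s and t) if and only if P is the vertex set of an induced path of G from s to t. In particular, the vertex set of any induced path between s and t is uniquely determined. -/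
/-- `P` is the vertex set of an induced path of `G` from `s` to `t`: a path
such that the only edges of `G` between its vertices are the consecutive edges
of the path (a single vertex is the trivial induced path from `s` to `s`). -/
def IsInducedPathSet {V : Type*} [DecidableEq V] (G : SimpleGraph V)
    (s t : V) (P : Finset V) : Prop :=
  ∃ p : G.Walk s t, p.IsPath ∧
    (∀ u v : V, u ∈ p.support → v ∈ p.support → G.Adj u v →
      Sym2.mk u v ∈ p.edges) ∧
    P = p.support.toFinset

/-
Geodesics are chordless, so every connected vertex set containing `s` and `t` contains the
vertices of an induced `s`–`t` path. Conversely, in a chordful graph an induced path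
`s, s₁, …, t` lies inside every `s`–`t` walk `q`: if `q` avoided `s₁`, follow `q` from `s` to
the first vertex `c` it shares with the rest of the path and return along the path to `s₁`;
with the edge `s₁s` this closes a cycle, hence a clique, so `sc` is an edge, which is a chord
unless `c = s₁`. Thus the vertex set of an induced path is the smallest connected set
containing `s` and `t`, and such a smallest set is unique.
-/

lemma IsMinPath.unique_s13 {V : Type*} {𝓑 : Set (Finset V)} {s t : V} {P P' : Finset V}
    (hP : IsMinPath 𝓑 s t P) (hP' : IsMinPath 𝓑 s t P') : P = P' :=
  (hP.2.2.2 P' hP'.1 hP'.2.1 hP'.2.2.1).antisymm (hP'.2.2.2 P hP.1 hP.2.1 hP.2.2.1)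

namespace SimpleGraph

variable {V : Type*} {G : SimpleGraph V} {u v w : V}

def IsChordful (G : SimpleGraph V) : Prop :=
  ∀ (v : V) (c : G.Walk v v), c.IsCycle → G.IsClique {x | x ∈ c.support}

namespace Walk

lemma IsChordless.of_cons {h : G.Adj u v} {p : G.Walk v w} (hp : (cons h p).IsChordless)
    (hu : u ∉ p.support) : p.IsChordless := by
  rw [isChordless_iff_forall_mem_edges] at hp ⊢
  intro x y hx hy hxy
  rcases List.mem_cons.mp (hp (List.mem_cons_of_mem u hx) (List.mem_cons_of_mem u hy) hxy)
    with he | he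
  · rcases Sym2.eq_iff.mp he with ⟨rfl, -⟩ | ⟨-, rfl⟩
    · exact absurd hx hu
    · exact absurd hy hu
  · exact he

lemma IsChordless.map {W : Type*} {G' : SimpleGraph W} (f : G ↪g G') {p : G.Walk u v}
    (hp : p.IsChordless) : (p.map f.toHom).IsChordless := by
  rw [isChordless_iff_forall_mem_edges] at hp ⊢
  intro x y hx hy hxy
  simp only [support_map, List.mem_map] at hx hy
  obtain ⟨x, hx, rfl⟩ := hx
  obtain ⟨y, hy, rfl⟩ := hy
  rw [edges_map]
  exact List.mem_map_of_mem (hp hx hy (f.map_adj_iff.mp hxy))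

lemma mem_edges_of_length_eq_one {p : G.Walk u v} (hp : p.length = 1) : s(u, v) ∈ p.edges := by
  cases p with
  | nil => simp at hp
  | cons h p' => cases p' with
    | nil => simp
    | cons => simp at hp

lemma exists_isSubwalk_of_mem_support [DecidableEq V] (p : G.Walk u v) {x y : V}
    (hx : x ∈ p.support) (hy : y ∈ p.support) :
    (∃ r : G.Walk x y, r.IsSubwalk p) ∨ ∃ r : G.Walk y x, r.IsSubwalk p := by
  by_cases hxy : x ∈ (p.takeUntil y hy).support
  · exact .inl ⟨_, ((p.takeUntil y hy).isSubwalk_dropUntil hxy).trans (p.isSubwalk_takeUntil hy)⟩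
  · have hx' : x ∈ (p.dropUntil y hy).support := by
      rw [← p.take_spec hy, mem_support_append_iff] at hx
      exact hx.resolve_left hxy
    exact .inr ⟨_, ((p.dropUntil y hy).isSubwalk_takeUntil hx').trans (p.isSubwalk_dropUntil hy)⟩

lemma isChordless_of_length_eq_dist {p : G.Walk u v} (hp : p.length = G.dist u v) :
    p.IsChordless := by
  classical
  have edge_mem : ∀ {a b : V} (r : G.Walk a b), r.IsSubwalk p → G.Adj a b → s(a, b) ∈ p.edges :=
    fun r hr hab ↦ hr.edges_subset <| mem_edges_of_length_eq_one <|
      (length_eq_dist_of_subwalk hp hr).trans (dist_eq_one_iff_adj.mpr hab)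
  rw [isChordless_iff_forall_mem_edges]
  intro x y hx hy hxy
  rcases p.exists_isSubwalk_of_mem_support hx hy with ⟨r, hr⟩ | ⟨r, hr⟩
  · exact edge_mem r hr hxy
  · exact Sym2.eq_swap ▸ edge_mem r hr hxy.symm

lemma exists_isPath_to_first_mem [DecidableEq V] (q : G.Walk u v) {S : Set V} (hv : v ∈ S) :
    ∃ c ∈ S, ∃ r : G.Walk u c, r.IsPath ∧ r.support ⊆ q.support ∧
      ∀ x ∈ r.support, x ∈ S → x = c := by
  induction q with
  | nil => exact ⟨_, hv, nil, .nil, fun _ h ↦ h, by simp⟩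
  | @cons u u' v h q ih =>
    by_cases hu : u ∈ S
    · exact ⟨u, hu, nil, .nil, by simp, by simp⟩
    obtain ⟨c, hc, r, -, hrq, hrS⟩ := ih hv
    refine ⟨c, hc, (cons h r).bypass, bypass_isPath _, fun x hx ↦ ?_, fun x hx hxS ↦ ?_⟩ <;>
      rcases List.mem_cons.mp ((cons h r).support_bypass_subset_support hx) with rfl | hx
    · exact List.mem_cons_self
    · exact List.mem_cons_of_mem _ (hrq hx)
    · exact absurd hxS hu
    · exact hrS x hx hxS

lemma IsChordless.snd_mem_support [DecidableEq V] (hG : G.IsChordful) {h : G.Adj u v}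
    {p : G.Walk v w} (hpath : (cons h p).IsPath) (hp : (cons h p).IsChordless)
    (q : G.Walk u w) : v ∈ q.support := by
  by_contra hvq
  rw [cons_isPath_iff] at hpath
  obtain ⟨hpath, hup⟩ := hpath
  obtain ⟨c, hcp, r, hr, hrq, hrp⟩ := q.exists_isPath_to_first_mem (S := {x | x ∈ p.support})
    p.end_mem_support
  have hcv : c ≠ v := fun hcv ↦ hvq (hcv ▸ hrq r.end_mem_support)
  have huc : u ≠ c := fun huc ↦ hup (huc ▸ hcp)
  set p₀ := p.takeUntil c hcp
  have hcycle : ((cons h p₀).append r.reverse).IsCycle := by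
    refine IsPath.isCycle_append ?_ hr.reverse ?_ (.inl ?_)
    · exact (cons_isPath_iff _ _).mpr
        ⟨hpath.takeUntil hcp, fun hu ↦ hup (p.support_takeUntil_subset_support hcp hu)⟩
    · intro x hxp hxr
      have hc : c ∉ r.reverse.support.tail := by
        have := hr.reverse.support_nodup
        rw [← cons_tail_support] at this
        exact (List.nodup_cons.mp this).1
      have hxr' : x ∈ r.support := by
        simpa [support_reverse] using List.mem_of_mem_tail hxr
      refine hc (hrp x hxr' ?_ ▸ hxr)
      exact p.support_takeUntil_subset_support hcp (by simpa using hxp)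
    · have : p₀.length ≠ 0 := fun h0 ↦ hcv (p₀.eq_of_length_eq_zero h0).symm
      simp only [length_cons]
      omega
  have hadj : G.Adj u c := hG u _ hcycle (start_mem_support _)
    (by simp [support_append, support_reverse]) huc
  rcases List.mem_cons.mp (hp.mem_edges (start_mem_support _)
      (List.mem_cons_of_mem u hcp) hadj) with he | he
  · exact hcv (Sym2.congr_right.mp he)
  · exact hup (p.fst_mem_support_of_mem_edges he)

lemma IsChordless.support_subset_support [DecidableEq V] (hG : G.IsChordful) {p : G.Walk u v}
    (hpath : p.IsPath) (hp : p.IsChordless) (q : G.Walk u v) : p.support ⊆ q.support := by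
  induction p with
  | nil => simp [q.start_mem_support]
  | @cons u v w h p ih =>
    have hvq : v ∈ q.support := hp.snd_mem_support hG hpath q
    have hup : u ∉ p.support := ((cons_isPath_iff _ _).mp hpath).2
    rw [support_cons, List.cons_subset]
    exact ⟨q.start_mem_support, fun x hx ↦ q.support_dropUntil_subset_support hvq <|
      ih ((cons_isPath_iff _ _).mp hpath).1 (hp.of_cons hup) (q.dropUntil v hvq) hx⟩

lemma support_toFinset_mem_graphBuilding_s13 [DecidableEq V] (p : G.Walk u v) :
    p.support.toFinset ∈ graphBuilding G := by
  refine ⟨⟨u, by simp⟩, ?_⟩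
  convert p.connected_induce_support using 2 <;> ext <;> simp

end Walk

lemma exists_isChordless_of_mem_graphBuilding {B : Finset V} (hB : B ∈ graphBuilding G)
    (hu : u ∈ B) (hv : v ∈ B) :
    ∃ p : G.Walk u v, p.IsPath ∧ p.IsChordless ∧ ∀ x ∈ p.support, x ∈ B := by
  obtain ⟨r, hr⟩ := (hB.2.preconnected ⟨u, hu⟩ ⟨v, hv⟩).exists_walk_length_eq_dist
  let f : G.induce (B : Set V) ↪g G := Embedding.induce _
  refine ⟨r.map f.toHom, (r.isPath_of_length_eq_dist hr).map f.injective, ?_, ?_⟩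
  · exact (r.isChordless_of_length_eq_dist hr).map _
  · intro x (hx : x ∈ (r.map f.toHom).support)
    obtain ⟨y, -, rfl⟩ := List.mem_map.mp (r.support_map f.toHom ▸ hx)
    exact y.2

lemma Walk.IsChordless.isMinPath [DecidableEq V] (hG : G.IsChordful) {p : G.Walk u v} (hpath : p.IsPath)
    (hp : p.IsChordless) : IsMinPath (graphBuilding G) u v p.support.toFinset := by
  refine ⟨p.support_toFinset_mem_graphBuilding_s13, by simp, by simp, fun B hB hu hv ↦ ?_⟩
  obtain ⟨q, -, -, hqB⟩ := exists_isChordless_of_mem_graphBuilding hB hu hv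
  exact fun x hx ↦ hqB x (hp.support_subset_support hG hpath q (List.mem_toFinset.mp hx))

end SimpleGraph

open SimpleGraph

theorem minPath_iff_inducedPathSet_general {V : Type*} [DecidableEq V]
    (G : SimpleGraph V)
    (hchordful : ∀ (v : V) (c : G.Walk v v), c.IsCycle →
      G.IsClique {x | x ∈ c.support})
    (s t : V) :
    (∀ P : Finset V,
      IsMinPath (graphBuilding G) s t P ↔ IsInducedPathSet G s t P) ∧
    (∀ P P' : Finset V,
      IsInducedPathSet G s t P → IsInducedPathSet G s t P' → P = P') := by
  have of_induced : ∀ P, IsInducedPathSet G s t P → IsMinPath (graphBuilding G) s t P := by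
    rintro _ ⟨p, hpath, hind, rfl⟩
    exact (Walk.isChordless_iff_forall_mem_edges.mpr hind).isMinPath hchordful hpath
  refine ⟨fun P ↦ ⟨fun hP ↦ ?_, of_induced P⟩,
    fun P P' hP hP' ↦ (of_induced P hP).unique_s13 (of_induced P' hP')⟩
  obtain ⟨p, hpath, hp, -⟩ := exists_isChordless_of_mem_graphBuilding hP.1 hP.2.1 hP.2.2.1
  rw [hP.unique_s13 (hp.isMinPath hchordful hpath)]
  exact ⟨p, hpath, fun _ _ ↦ hp.mem_edges, rfl⟩

/-- In a finite connected chordful graph `G`, a subset `P` of vertices is the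
`𝓑(G)`-path `π(s,t)` if and only if `P` is the vertex set of an induced path
of `G` from `s` to `t`; in particular, the vertex set of an induced path
between `s` and `t` is uniquely determined. -/
theorem minPath_iff_inducedPathSet {V : Type*} [Fintype V] [DecidableEq V]
    (G : SimpleGraph V) (hG : G.Connected)
    (hchordful : ∀ (v : V) (c : G.Walk v v), c.IsCycle →
      G.IsClique {x | x ∈ c.support})
    (s t : V) :
    (∀ P : Finset V,
      IsMinPath (graphBuilding G) s t P ↔ IsInducedPathSet G s t P) ∧
    (∀ P P' : Finset V,
      IsInducedPathSet G s t P → IsInducedPathSet G s t P' → P = P') :=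
  minPath_iff_inducedPathSet_general G hchordful s t
end

section
/- Let 𝓑 be a connected building set on a finite ground set S and let 𝓝 be a 𝓑-nested set. Set 𝓝⁺ = 𝓝 ∪ {S}, and for N ∈ 𝓝⁺ define X_N = N \ ⋃{N' ∈ 𝓝⁺ : N' ⊊ N}. Then the sets X_N for N ∈ 𝓝⁺ are all nonempty and form a partition of S (they are pairwise disjoint and their union is S). -/
/-- The label set `X_N = N \ ⋃ {N' ∈ 𝓝⁺ : N' ⊊ N}` of an element `N` of the
augmented nested set `𝓝⁺`. -/
def nestedLabel {V : Type*} (𝓝p : Set (Finset V)) (N : Finset V) : Set V :=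
  (N : Set V) \ ⋃ N' ∈ {N' : Finset V | N' ∈ 𝓝p ∧ N' ⊂ N}, (N' : Set V)

def IsLaminar {V : Type*} (𝓕 : Set (Finset V)) : Prop :=
  ∀ N ∈ 𝓕, ∀ N' ∈ 𝓕, N ⊆ N' ∨ N' ⊆ N ∨ Disjoint N N'

namespace IsLaminar

variable {V : Type*} {𝓕 𝓖 : Set (Finset V)}

lemma mono (h𝓕 : IsLaminar 𝓕) (h𝓖 : 𝓖 ⊆ 𝓕) : IsLaminar 𝓖 :=
  fun N hN N' hN' => h𝓕 N (h𝓖 hN) N' (h𝓖 hN')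

lemma union_singleton_univ [Fintype V] (h𝓕 : IsLaminar 𝓕) :
    IsLaminar (𝓕 ∪ {Finset.univ}) := by
  rintro N (hN | rfl) N' (hN' | rfl)
  · exact h𝓕 N hN N' hN'
  all_goals simp

lemma disjoint_of_maximal (h𝓕 : IsLaminar 𝓕) {M M' : Finset V}
    (hM : Maximal (· ∈ 𝓕) M) (hM' : Maximal (· ∈ 𝓕) M') (hne : M ≠ M') : Disjoint M M' := by
  rcases h𝓕 M hM.prop M' hM'.prop with h | h | h
  · exact absurd (hM.eq_of_le hM'.prop h) hne
  · exact absurd (hM'.eq_of_le hM.prop h).symm hne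
  · exact h

end IsLaminar

section NestedLabel

variable {V : Type*} {𝓕 : Set (Finset V)} {N : Finset V}

lemma mem_nestedLabel_iff {v : V} :
    v ∈ nestedLabel 𝓕 N ↔ v ∈ N ∧ ∀ N' ∈ 𝓕, N' ⊂ N → v ∉ N' := by
  simp only [nestedLabel, Set.mem_sdiff, Set.mem_iUnion, Finset.mem_coe, Set.mem_ofPred_eq,
    not_exists, and_imp]

lemma nestedLabel_subset : nestedLabel 𝓕 N ⊆ N :=
  Set.sdiff_subset

lemma IsLaminar.disjoint_nestedLabel (h𝓕 : IsLaminar 𝓕) {N' : Finset V} (hN : N ∈ 𝓕)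
    (hN' : N' ∈ 𝓕) (hne : N ≠ N') : Disjoint (nestedLabel 𝓕 N) (nestedLabel 𝓕 N') := by
  refine Set.disjoint_left.2 fun v hv hv' => ?_
  rw [mem_nestedLabel_iff] at hv hv'
  rcases h𝓕 N hN N' hN' with h | h | h
  · exact hv'.2 N hN (h.ssubset_of_ne hne) hv.1
  · exact hv.2 N' hN' (h.ssubset_of_ne hne.symm) hv'.1
  · exact Finset.disjoint_left.1 h hv.1 hv'.1

lemma iUnion_nestedLabel (𝓕 : Set (Finset V)) :
    ⋃ N ∈ 𝓕, nestedLabel 𝓕 N = ⋃ N ∈ 𝓕, (N : Set V) := by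
  refine (Set.biUnion_mono subset_rfl fun _ _ => nestedLabel_subset).antisymm ?_
  refine Set.iUnion₂_subset fun N hN v hv => ?_
  obtain ⟨M, -, hM⟩ := exists_minimal_le_of_wellFoundedLT (fun M => M ∈ 𝓕 ∧ v ∈ M) N ⟨hN, hv⟩
  refine Set.mem_biUnion hM.prop.1 (mem_nestedLabel_iff.2 ⟨hM.prop.2, fun N' hN' hN'M hvN' => ?_⟩)
  exact hN'M.not_subset (hM.le_of_le ⟨hN', hvN'⟩ hN'M.subset)

lemma exists_maximal_ssubset_mem_of_nestedLabel_eq_empty (hN : nestedLabel 𝓕 N = ∅) {v : V}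
    (hv : v ∈ N) : ∃ M, Maximal (· ∈ {M ∈ 𝓕 | M ⊂ N}) M ∧ v ∈ M := by
  have hcover : ∃ N' ∈ 𝓕, N' ⊂ N ∧ v ∈ N' := by
    by_contra! h
    exact (hN ▸ mem_nestedLabel_iff.2 ⟨hv, h⟩ : v ∈ (∅ : Set V))
  obtain ⟨N', hN', hN'N, hvN'⟩ := hcover
  have hfin : {M ∈ 𝓕 | M ⊂ N}.Finite :=
    N.powerset.finite_toSet.subset fun M hM => Finset.mem_powerset.2 hM.2.subset
  obtain ⟨M, hN'M, hM⟩ := hfin.exists_le_maximal ⟨hN', hN'N⟩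
  exact ⟨M, hM, hN'M hvN'⟩

lemma two_le_card_of_biUnion_eq [DecidableEq V] {F : Finset (Finset V)} (hF : ∀ M ∈ F, M ⊂ N)
    (hN : N.Nonempty) (hcover : F.biUnion id = N) : 2 ≤ F.card := by
  obtain ⟨v, hv⟩ := hN
  obtain ⟨M, hM, hvM⟩ := Finset.mem_biUnion.1 (hcover ▸ hv)
  obtain ⟨w, hw, hwM⟩ := Finset.exists_of_ssubset (hF M hM)
  obtain ⟨M', hM', hwM'⟩ := Finset.mem_biUnion.1 (hcover ▸ hw)
  exact Finset.one_lt_card.2 ⟨M, hM, M', hM', fun h => hwM (h ▸ hwM')⟩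

lemma IsLaminar.exists_disjoint_cover_of_nestedLabel_eq_empty [DecidableEq V]
    (h𝓕 : IsLaminar 𝓕) (hN : nestedLabel 𝓕 N = ∅) (hNne : N.Nonempty) :
    ∃ F : Finset (Finset V), (∀ M ∈ F, M ∈ 𝓕 ∧ M ⊂ N) ∧ 2 ≤ F.card ∧
      (∀ M ∈ F, ∀ M' ∈ F, M ≠ M' → Disjoint M M') ∧ F.biUnion id = N := by
  classical
  let F := N.powerset.filter (Maximal (· ∈ {M ∈ 𝓕 | M ⊂ N}))
  have hmemF {M : Finset V} : M ∈ F ↔ Maximal (· ∈ {M ∈ 𝓕 | M ⊂ N}) M := by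
    simpa [F] using fun hM => hM.prop.2.subset
  have hcover : F.biUnion id = N := by
    refine subset_antisymm (Finset.biUnion_subset.2 fun M hM => (hmemF.1 hM).prop.2.subset)
      fun v hv => ?_
    obtain ⟨M, hM, hvM⟩ := exists_maximal_ssubset_mem_of_nestedLabel_eq_empty hN hv
    exact Finset.mem_biUnion.2 ⟨M, hmemF.2 hM, hvM⟩
  refine ⟨F, fun M hM => (hmemF.1 hM).prop,
    two_le_card_of_biUnion_eq (fun M hM => (hmemF.1 hM).prop.2) hNne hcover,
    fun M hM M' hM' hne => ?_, hcover⟩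
  exact (h𝓕.mono fun _ h => h.1).disjoint_of_maximal (hmemF.1 hM) (hmemF.1 hM') hne

end NestedLabel

/-- For a connected building set `𝓑` and a `𝓑`-nested set `𝓝`, setting
`𝓝⁺ = 𝓝 ∪ {S}` and `X_N = N \ ⋃ {N' ∈ 𝓝⁺ : N' ⊊ N}`, the sets `X_N` for
`N ∈ 𝓝⁺` are nonempty, pairwise disjoint, and their union is the ground
set. -/
theorem nestedLabels_partition {V : Type*} [Fintype V] [DecidableEq V]
    (𝓑 𝓝 : Set (Finset V)) (hbuild : IsBuilding 𝓑)
    (hconn : (Finset.univ : Finset V) ∈ 𝓑)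
    (hnested : IsNested 𝓑 𝓝) :
    (∀ N ∈ 𝓝 ∪ {Finset.univ}, (nestedLabel (𝓝 ∪ {Finset.univ}) N).Nonempty) ∧
    (∀ N ∈ 𝓝 ∪ {Finset.univ}, ∀ N' ∈ 𝓝 ∪ {Finset.univ}, N ≠ N' →
      Disjoint (nestedLabel (𝓝 ∪ {Finset.univ}) N)
        (nestedLabel (𝓝 ∪ {Finset.univ}) N')) ∧
    (⋃ N ∈ 𝓝 ∪ {Finset.univ}, nestedLabel (𝓝 ∪ {Finset.univ}) N)
      = (Set.univ : Set V) := by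
  obtain ⟨hsub, hlam, hdisjUnion⟩ := hnested
  have hlam' : IsLaminar (𝓝 ∪ {Finset.univ}) := IsLaminar.union_singleton_univ
    fun N hN N' hN' => (hlam N hN N' hN').imp_right <|
      Or.imp_right Finset.disjoint_iff_inter_eq_empty.2
  have hmem𝓑 : ∀ N ∈ 𝓝 ∪ {Finset.univ}, N ∈ 𝓑 := by
    rintro N (hN | rfl)
    exacts [(hsub hN).1, hconn]
  refine ⟨fun N hN => ?_, fun N hN N' hN' hne => hlam'.disjoint_nestedLabel hN hN' hne, ?_⟩
  · refine Set.nonempty_iff_ne_empty.2 fun hempty => ?_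
    obtain ⟨F, hF, hcard, hdisj, hcover⟩ :=
      hlam'.exists_disjoint_cover_of_nestedLabel_eq_empty hempty (hbuild.1 N (hmem𝓑 N hN))
    have hF𝓝 : ↑F ⊆ 𝓝 := fun M hM =>
      (hF M hM).1.resolve_right fun hMuniv => (hF M hM).2.not_subset (hMuniv ▸ N.subset_univ)
    exact hdisjUnion F hF𝓝 hcard
      (fun M hM M' hM' hne => Finset.disjoint_iff_inter_eq_empty.1 (hdisj M hM M' hM' hne))
      (hcover ▸ hmem𝓑 N hN)
  · rw [iUnion_nestedLabel, Set.eq_univ_iff_forall]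
    exact fun v => Set.mem_biUnion (Or.inr rfl) (Finset.mem_univ v)
end
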